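/- arXiv:1003.0495 — 2 statements merged into one kernel-verified Lean document; each statement's English description precedes it below -/
import Mathlib

section
/- Let v(ξ,η,ζ) = ξη/(1−ζ), the H¹-conforming pyramidal shape function associated with the base vertex (1,1,0). For every fixed (ξ,η) and every ζ < 1, the third derivative of the map ζ ↦ v(ξ,η,ζ) equals 6ξη/(1−ζ)⁴, and this third partial derivative is not square-integrable on K̂: ∫_{K̂} (6ξη/(1−ζ)⁴)² d(ξ,η,ζ) = +∞. In particular, ∂³v/∂ζ³ ∉ L²(K̂). -/
/-!
Since v is ξη times 1/(1 - ζ), its third ζ-derivative is 3! ξη/(1 - ζ)⁴. For the divergence,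
restrict to the part of K̂ where ξ, η ≥ (1 - ζ)/2: there the squared derivative is at least
(9/4)(1 - ζ)⁻⁴, while the ζ-slice is a square of area (1 - ζ)²/4, so Cavalieri's principle leaves
(9/16) ∫₀¹ (1 - ζ)⁻² dζ = ∞.
-/

open MeasureTheory

noncomputable section

/-- The reference pyramid K̂ ⊂ ℝ³ (coordinates (ξ, η, ζ)). -/
def Khat : Set (ℝ × ℝ × ℝ) :=
  {p | 0 ≤ p.2.2 ∧ p.2.2 ≤ 1 ∧ 0 ≤ p.1 ∧ p.1 ≤ 1 - p.2.2 ∧ 0 ≤ p.2.1 ∧ p.2.1 ≤ 1 - p.2.2}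

/-- The H¹ shape function of the base vertex (1,1,0): v(ξ,η,ζ) = ξη/(1−ζ). -/
def vShape (p : ℝ × ℝ × ℝ) : ℝ := p.1 * p.2.1 / (1 - p.2.2)

open Set

-- At `x = 1` both sides are the junk value `0`.
open Nat in
theorem iteratedDeriv_div_one_sub {𝕜 : Type*} [NontriviallyNormedField 𝕜] (c x : 𝕜) (n : ℕ) :
    iteratedDeriv n (fun z => c / (1 - z)) x = n ! * c / (1 - x) ^ (n + 1) := by
  have hfun : (fun z : 𝕜 => c / (1 - z)) = fun z => c * ((-1) * z + 1)⁻¹ := by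
    funext z; rw [div_eq_mul_inv]; ring_nf
  rw [hfun, iteratedDeriv_const_mul_field, iteratedDeriv_eq_iterate, iter_deriv_inv_linear]
  dsimp only
  rw [show (-1 - n : ℤ) = -((n + 1 : ℕ) : ℤ) by push_cast; ring, zpow_neg, zpow_natCast,
    neg_one_mul, neg_add_eq_sub, mul_right_comm _ (n ! : 𝕜), ← mul_pow]
  simp only [mul_neg, mul_one, neg_neg, one_pow, one_mul, div_eq_mul_inv]
  ring

theorem iteratedDeriv_three_vShape (ξ η ζ : ℝ) :
    iteratedDeriv 3 (fun z => vShape (ξ, η, z)) ζ = 6 * ξ * η / (1 - ζ) ^ 4 := by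
  simpa [vShape, Nat.factorial, mul_assoc] using iteratedDeriv_div_one_sub (ξ * η) ζ 3

theorem setLIntegral_prod_comp_snd {α β : Type*} [MeasurableSpace α] [MeasurableSpace β]
    {μ : Measure α} {ν : Measure β} [SFinite μ] [SFinite ν] {T : Set (α × β)}
    (hT : MeasurableSet T) {F : β → ENNReal} (hF : Measurable F) :
    ∫⁻ p in T, F p.2 ∂(μ.prod ν) = ∫⁻ y, F y * μ {x | (x, y) ∈ T} ∂ν := by
  rw [← lintegral_indicator hT,
    lintegral_prod_symm' _ ((hF.comp measurable_snd).indicator (f := fun p => F p.2) hT)]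
  refine lintegral_congr fun y => ?_
  exact lintegral_indicator_const (measurable_prodMk_right hT) (F y)

theorem setLIntegral_prod₃_comp_snd_snd {α β γ : Type*} [MeasurableSpace α] [MeasurableSpace β]
    [MeasurableSpace γ] {μ : Measure α} {ν : Measure β} {ρ : Measure γ} [SFinite μ] [SFinite ν]
    [SFinite ρ] {S : Set (α × β × γ)} (hS : MeasurableSet S) {F : γ → ENNReal} (hF : Measurable F) :
    ∫⁻ p in S, F p.2.2 ∂(μ.prod (ν.prod ρ)) =
      ∫⁻ z, F z * (μ.prod ν) {q | (q.1, q.2, z) ∈ S} ∂ρ := by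
  rw [← (measurePreserving_prodAssoc μ ν ρ).setLIntegral_comp_preimage_emb
    MeasurableEquiv.prodAssoc.measurableEmbedding]
  exact setLIntegral_prod_comp_snd (MeasurableEquiv.prodAssoc.measurable hS) hF

theorem lintegral_Ico_div_one_sub_sq_eq_top {c : ℝ} (hc : 0 < c) :
    ∫⁻ ζ in Ico 0 1, ENNReal.ofReal (c / (1 - ζ) ^ 2) = ⊤ := by
  by_contra h
  have hint : IntegrableOn (fun ζ : ℝ => c / (1 - ζ) ^ 2) (Ico 0 1) :=
    (lintegral_ofReal_ne_top_iff_integrable (by fun_prop : Measurable _).aestronglyMeasurable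
      (ae_of_all _ fun _ => by positivity)).1 h
  have hinv : IntervalIntegrable (fun ζ : ℝ => (ζ - 1)⁻¹) volume 0 1 := by
    rw [intervalIntegrable_iff_integrableOn_Ico_of_le zero_le_one]
    refine (hint.const_mul c⁻¹).mono' (by fun_prop) ?_
    filter_upwards [ae_restrict_mem measurableSet_Ico] with ζ ⟨h0, h1⟩
    have hpos : 0 < 1 - ζ := by linarith
    rw [norm_inv, Real.norm_eq_abs, abs_sub_comm, abs_of_pos hpos, ← mul_div_assoc,
      inv_mul_cancel₀ hc.ne', one_div, inv_le_inv₀ hpos (by positivity)]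
    nlinarith
  simp at hinv

theorem not_memLp_two_of_lintegral_sq_eq_top {α : Type*} [MeasurableSpace α] {μ : Measure α}
    {f : α → ℝ} (h : ∫⁻ x, ENNReal.ofReal (f x ^ 2) ∂μ = ⊤) : ¬MemLp f 2 μ :=
  fun hf => hf.integrable_sq.lintegral_lt_top.ne h

def Kcorner : Set (ℝ × ℝ × ℝ) :=
  {p | p.2.2 ∈ Ico 0 1 ∧ p.1 ∈ Icc ((1 - p.2.2) / 2) (1 - p.2.2) ∧
    p.2.1 ∈ Icc ((1 - p.2.2) / 2) (1 - p.2.2)}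

theorem measurableSet_Kcorner : MeasurableSet Kcorner := by
  unfold Kcorner
  measurability

theorem Kcorner_subset_Khat : Kcorner ⊆ Khat := by
  rintro ⟨ξ, η, ζ⟩ ⟨⟨h0, h1⟩, ⟨hξ, hξ'⟩, ⟨hη, hη'⟩⟩
  exact ⟨h0, h1.le, by linarith, hξ', by linarith, hη'⟩

theorem volume_slice_Kcorner {ζ : ℝ} (hζ : ζ ∈ Ico 0 1) :
    volume {q : ℝ × ℝ | (q.1, q.2, ζ) ∈ Kcorner} =
      ENNReal.ofReal ((1 - ζ) / 2) * ENNReal.ofReal ((1 - ζ) / 2) := by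
  have hslice : {q : ℝ × ℝ | (q.1, q.2, ζ) ∈ Kcorner} =
      Icc ((1 - ζ) / 2) (1 - ζ) ×ˢ Icc ((1 - ζ) / 2) (1 - ζ) := by
    ext q; exact and_iff_right hζ
  rw [hslice, Measure.volume_eq_prod, Measure.prod_prod, Real.volume_Icc]
  ring_nf

theorem sq_ge_of_mem_Kcorner {p : ℝ × ℝ × ℝ} (hp : p ∈ Kcorner) :
    9 / 4 / (1 - p.2.2) ^ 4 ≤ (6 * p.1 * p.2.1 / (1 - p.2.2) ^ 4) ^ 2 := by
  obtain ⟨⟨h0, h1⟩, ⟨hξ, -⟩, ⟨hη, -⟩⟩ := hp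
  have hpos : 0 < 1 - p.2.2 := by linarith
  have hprod : ((1 - p.2.2) / 2) ^ 2 ≤ p.1 * p.2.1 := by
    rw [sq]; exact mul_le_mul hξ hη (by positivity) (by linarith)
  rw [div_pow, mul_assoc, mul_pow, div_le_div_iff₀ (by positivity) (by positivity)]
  have := mul_le_mul hprod hprod (by positivity) ((sq_nonneg _).trans hprod)
  nlinarith [pow_pos hpos 4]

theorem lintegral_Kcorner :
    ∫⁻ p in Kcorner, ENNReal.ofReal (9 / 4 / (1 - p.2.2) ^ 4) = ⊤ := by
  rw [Measure.volume_eq_prod, Measure.volume_eq_prod,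
    setLIntegral_prod₃_comp_snd_snd (F := fun ζ => ENNReal.ofReal (9 / 4 / (1 - ζ) ^ 4))
      measurableSet_Kcorner (by fun_prop)]
  refine eq_top_mono (setLIntegral_le_lintegral (Ico 0 1) _) ?_
  rw [← lintegral_Ico_div_one_sub_sq_eq_top (c := 9 / 16) (by norm_num)]
  refine setLIntegral_congr_fun measurableSet_Ico fun ζ hζ => ?_
  have hpos : 0 < 1 - ζ := by linarith [hζ.2]
  rw [← Measure.volume_eq_prod, volume_slice_Kcorner hζ, ← ENNReal.ofReal_mul (by positivity),
    ← ENNReal.ofReal_mul (by positivity)]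
  congr 1
  field_simp
  ring

theorem setLIntegral_Khat_sq_eq_top :
    ∫⁻ p in Khat, ENNReal.ofReal ((6 * p.1 * p.2.1 / (1 - p.2.2) ^ 4) ^ 2) = ⊤ := by
  refine eq_top_mono ?_ lintegral_Kcorner
  calc ∫⁻ p in Kcorner, ENNReal.ofReal (9 / 4 / (1 - p.2.2) ^ 4)
      ≤ ∫⁻ p in Kcorner, ENNReal.ofReal ((6 * p.1 * p.2.1 / (1 - p.2.2) ^ 4) ^ 2) :=
        setLIntegral_mono' measurableSet_Kcorner fun p hp =>
          ENNReal.ofReal_le_ofReal (sq_ge_of_mem_Kcorner hp)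
    _ ≤ ∫⁻ p in Khat, ENNReal.ofReal ((6 * p.1 * p.2.1 / (1 - p.2.2) ^ 4) ^ 2) :=
        lintegral_mono_set Kcorner_subset_Khat

/-- the third ζ-derivative of v = ξη/(1−ζ) equals 6ξη/(1−ζ)⁴ (for ζ < 1),
its square has infinite integral over K̂, and hence ∂³v/∂ζ³ ∉ L²(K̂). -/
theorem stmt_18 :
    (∀ ξ η ζ : ℝ, ζ < 1 →
      iteratedDeriv 3 (fun z : ℝ => vShape (ξ, η, z)) ζ = 6 * ξ * η / (1 - ζ) ^ 4) ∧
    (∫⁻ p in Khat, ENNReal.ofReal ((6 * p.1 * p.2.1 / (1 - p.2.2) ^ 4) ^ 2) = ⊤) ∧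
    ¬ MemLp (fun p : ℝ × ℝ × ℝ => iteratedDeriv 3 (fun z : ℝ => vShape (p.1, p.2.1, z)) p.2.2)
        2 (volume.restrict Khat) := by
  refine ⟨fun ξ η ζ _ => iteratedDeriv_three_vShape ξ η ζ, setLIntegral_Khat_sq_eq_top, ?_⟩
  simp only [iteratedDeriv_three_vShape]
  exact not_memLp_two_of_lintegral_sq_eq_top setLIntegral_Khat_sq_eq_top
end
end

section
/- The projective map φ(x,y,z) = (x/(1+z), y/(1+z), z/(1+z)) restricts to a bijection from the infinite pyramid K∞ onto K̂ ∖ {(0,0,1)}, with inverse (ξ,η,ζ) ↦ (ξ/(1−ζ), η/(1−ζ), ζ/(1−ζ)). Moreover, φ is differentiable at every point (x,y,z) ∈ ℝ³ with z > −1, and the determinant of its (Fréchet) derivative at such a point equals (1+z)^{−4}. -/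
/-!
φ is the central projection `q ↦ (1 + ℓ q)⁻¹ • q` attached to the linear form `ℓ = z`, and the
proposed inverse is the central projection attached to `-ℓ`; these two maps undo each other
wherever the denominators are nonzero, since `1 - ℓ (φ q) = (1 + ℓ q)⁻¹`. The derivative of φ
at `q` is `(1 + ℓ q)⁻¹` times the rank-one perturbation `v ↦ v - (1 + ℓ q)⁻¹ ℓ v • q` of the
identity, whose determinant is `1 - ℓ q / (1 + ℓ q) = (1 + ℓ q)⁻¹`; in dimension `n` this gives
`det Dφ(q) = (1 + ℓ q)^{-(n+1)}`, i.e. `(1 + z)⁻⁴` in ℝ³.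
-/

open MeasureTheory

noncomputable section

/-- The infinite pyramid K∞ = [0,1] × [0,1] × [0,∞). -/
def Kinf : Set (ℝ × ℝ × ℝ) :=
  {p | 0 ≤ p.1 ∧ p.1 ≤ 1 ∧ 0 ≤ p.2.1 ∧ p.2.1 ≤ 1 ∧ 0 ≤ p.2.2}

/-- The inverse of the projective map φ: (ξ,η,ζ) ↦ (ξ/(1−ζ), η/(1−ζ), ζ/(1−ζ)). -/
def phiInv (p : ℝ × ℝ × ℝ) : ℝ × ℝ × ℝ :=
  (p.1 / (1 - p.2.2), p.2.1 / (1 - p.2.2), p.2.2 / (1 - p.2.2))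

/-- The projective map φ: (x,y,z) ↦ (x/(1+z), y/(1+z), z/(1+z)). -/
def phiMap (q : ℝ × ℝ × ℝ) : ℝ × ℝ × ℝ :=
  (q.1 / (1 + q.2.2), q.2.1 / (1 + q.2.2), q.2.2 / (1 + q.2.2))

section CentralProjection

variable {𝕜 E : Type*}

section Algebra

variable [Field 𝕜] [AddCommGroup E] [Module 𝕜 E]

def centralProjection (ℓ : Module.Dual 𝕜 E) (q : E) : E :=
  (1 + ℓ q)⁻¹ • q

theorem centralProjection_neg_centralProjection (ℓ : Module.Dual 𝕜 E) {q : E}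
    (hq : 1 + ℓ q ≠ 0) : centralProjection (-ℓ) (centralProjection ℓ q) = q := by
  have h : 1 + (-ℓ) (centralProjection ℓ q) = (1 + ℓ q)⁻¹ := by
    simp only [centralProjection, LinearMap.neg_apply, map_smul, smul_eq_mul]
    field_simp
    ring
  rw [centralProjection, h, inv_inv, centralProjection, smul_inv_smul₀ hq]

end Algebra

variable [NontriviallyNormedField 𝕜] [NormedAddCommGroup E] [NormedSpace 𝕜 E]

theorem hasFDerivAt_centralProjection (ℓ : E →L[𝕜] 𝕜) {q : E} (hq : 1 + ℓ q ≠ 0) :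
    HasFDerivAt (centralProjection (ℓ : Module.Dual 𝕜 E))
      ((1 + ℓ q)⁻¹ • ContinuousLinearMap.id 𝕜 E
        + ((ContinuousLinearMap.toSpanSingleton 𝕜 (-((1 + ℓ q) ^ 2)⁻¹)).comp ℓ).smulRight q) q :=
  ((hasFDerivAt_inv hq).comp q (ℓ.hasFDerivAt.const_add 1)).smul (hasFDerivAt_id q)

theorem det_fderiv_centralProjection [FiniteDimensional 𝕜 E] (ℓ : E →L[𝕜] 𝕜) {q : E}
    (hq : 1 + ℓ q ≠ 0) :
    LinearMap.det (fderiv 𝕜 (centralProjection (ℓ : Module.Dual 𝕜 E)) q : E →ₗ[𝕜] E)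
      = (1 + ℓ q) ^ (-(Module.finrank 𝕜 E + 1 : ℤ)) := by
  set A := 1 + ℓ q
  have htrans : (fderiv 𝕜 (centralProjection (ℓ : Module.Dual 𝕜 E)) q : E →ₗ[𝕜] E)
      = A⁻¹ • LinearMap.transvection (-A⁻¹ • (ℓ : Module.Dual 𝕜 E)) q := by
    rw [(hasFDerivAt_centralProjection ℓ hq).fderiv]
    ext v
    simp only [ContinuousLinearMap.toLinearMap_add, ContinuousLinearMap.toLinearMap_smul,
      LinearMap.add_apply, LinearMap.smul_apply, ContinuousLinearMap.coe_coe, ContinuousLinearMap.id_apply,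
      ContinuousLinearMap.smulRight_apply, ContinuousLinearMap.comp_apply,
      ContinuousLinearMap.toSpanSingleton_apply, LinearMap.transvection.apply, smul_add, smul_smul]
    congr 2
    rw [smul_eq_mul, smul_eq_mul, ← inv_pow]
    ring
  have hdet : 1 + (-A⁻¹ • (ℓ : Module.Dual 𝕜 E)) q = A⁻¹ := by
    simp only [LinearMap.smul_apply, ContinuousLinearMap.coe_coe, smul_eq_mul, neg_mul]
    field_simp
    ring
  rw [htrans, LinearMap.det_smul, LinearMap.transvection.det, hdet, ← pow_succ, inv_pow, zpow_neg]
  norm_cast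

end CentralProjection

def zCoord : (ℝ × ℝ × ℝ) →L[ℝ] ℝ :=
  (ContinuousLinearMap.snd ℝ ℝ ℝ).comp (ContinuousLinearMap.snd ℝ ℝ (ℝ × ℝ))

@[simp]
theorem zCoord_apply (q : ℝ × ℝ × ℝ) : zCoord q = q.2.2 := rfl

theorem phiMap_eq_centralProjection :
    phiMap = centralProjection (zCoord : Module.Dual ℝ (ℝ × ℝ × ℝ)) := by
  ext q <;> simp [phiMap, centralProjection, div_eq_inv_mul]

theorem phiInv_eq_centralProjection :
    phiInv = centralProjection (-(zCoord : Module.Dual ℝ (ℝ × ℝ × ℝ))) := by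
  ext p <;> simp [phiInv, centralProjection, div_eq_inv_mul, sub_eq_add_neg]

theorem lt_one_of_mem_Khat_diff_apex {p : ℝ × ℝ × ℝ}
    (hp : p ∈ Khat \ {((0 : ℝ), (0 : ℝ), (1 : ℝ))}) : p.2.2 < 1 := by
  obtain ⟨⟨-, hz1, hx0, hx1, hy0, hy1⟩, hne⟩ := hp
  refine hz1.lt_of_ne fun hz => hne ?_
  have hx : p.1 = 0 := by linarith
  have hy : p.2.1 = 0 := by linarith
  exact Prod.ext hx (Prod.ext hy hz)

theorem mapsTo_phiMap_Kinf : Set.MapsTo phiMap Kinf (Khat \ {((0 : ℝ), (0 : ℝ), (1 : ℝ))}) := by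
  rintro ⟨x, y, z⟩ ⟨hx0, hx1, hy0, hy1, hz0⟩
  dsimp only at hx0 hx1 hy0 hy1 hz0
  have hA : 0 < 1 + z := by linarith
  have hζ : 1 - z / (1 + z) = 1 / (1 + z) := by field_simp; ring
  refine ⟨?_, fun h => ?_⟩
  · refine ⟨?_, ?_, ?_, ?_, ?_, ?_⟩ <;> dsimp only [phiMap]
    any_goals positivity
    · rw [div_le_one hA]; linarith
    · rw [hζ]; gcongr
    · rw [hζ]; gcongr
  · have hz : z / (1 + z) = 1 := congrArg (·.2.2) h
    rw [div_eq_one_iff_eq hA.ne'] at hz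
    linarith

theorem mapsTo_phiInv_Khat_diff_apex :
    Set.MapsTo phiInv (Khat \ {((0 : ℝ), (0 : ℝ), (1 : ℝ))}) Kinf := by
  intro p hp
  have hB : 0 < 1 - p.2.2 := by linarith [lt_one_of_mem_Khat_diff_apex hp]
  obtain ⟨⟨hz0, -, hx0, hx1, hy0, hy1⟩, -⟩ := hp
  refine ⟨?_, ?_, ?_, ?_, ?_⟩ <;> dsimp only [phiInv]
  any_goals positivity
  · exact (div_le_one hB).mpr hx1
  · exact (div_le_one hB).mpr hy1

theorem invOn_phiInv_phiMap :
    Set.InvOn phiInv phiMap Kinf (Khat \ {((0 : ℝ), (0 : ℝ), (1 : ℝ))}) := by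
  rw [phiInv_eq_centralProjection, phiMap_eq_centralProjection]
  constructor
  · intro q hq
    exact centralProjection_neg_centralProjection _ (by simp; linarith [hq.2.2.2.2])
  · intro p hp
    simpa using centralProjection_neg_centralProjection (-(zCoord : Module.Dual ℝ (ℝ × ℝ × ℝ)))
      (q := p) (by simp; linarith [lt_one_of_mem_Khat_diff_apex hp])

/-- φ restricts to a bijection from K∞ onto K̂ ∖ {(0,0,1)} with inverse
(ξ,η,ζ) ↦ (ξ/(1−ζ), η/(1−ζ), ζ/(1−ζ)); moreover φ is differentiable at every point
with z > −1 and the determinant of its derivative there is (1+z)⁻⁴. -/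
theorem stmt_19 :
    Set.BijOn phiMap Kinf (Khat \ {((0 : ℝ), (0 : ℝ), (1 : ℝ))}) ∧
    Set.InvOn phiInv phiMap Kinf (Khat \ {((0 : ℝ), (0 : ℝ), (1 : ℝ))}) ∧
    ∀ q : ℝ × ℝ × ℝ, -1 < q.2.2 →
      DifferentiableAt ℝ phiMap q ∧
      LinearMap.det ((fderiv ℝ phiMap q : (ℝ × ℝ × ℝ) →L[ℝ] (ℝ × ℝ × ℝ)) :
          (ℝ × ℝ × ℝ) →ₗ[ℝ] (ℝ × ℝ × ℝ)) = (1 + q.2.2) ^ (-4 : ℤ) := by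
  refine ⟨invOn_phiInv_phiMap.bijOn mapsTo_phiMap_Kinf mapsTo_phiInv_Khat_diff_apex,
    invOn_phiInv_phiMap, fun q hq => ?_⟩
  have hA : 1 + zCoord q ≠ 0 := by rw [zCoord_apply]; linarith
  rw [phiMap_eq_centralProjection]
  refine ⟨(hasFDerivAt_centralProjection zCoord hA).differentiableAt, ?_⟩
  rw [det_fderiv_centralProjection zCoord hA]
  norm_num
end
end
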